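/- With the notation of the context, and assuming in addition that A is a left weak H-module algebra via ρ, one has γ(Π^L(h)) = j_ν(ρ(h⊗1_A)) for all h ∈ H. -/
import Mathlib


/-!
Common framework: weak bialgebras, weak Hopf algebras, weak measures and
unitary weak crossed products, formalized via linear maps over a field `k`.
Sweedler sums are expressed by composites of canonical linear maps.
-/

open TensorProduct

set_option autoImplicit false
set_option maxHeartbeats 1000000

noncomputable section

namespace WeakCrossed

variable (k : Type*) [Field k]
variable (H : Type*) [Ring H] [Algebra k H] [Coalgebra k H]
variable (A : Type*) [Ring A] [Algebra k A]

/-- The comultiplication of `H`. -/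
abbrev comulH : H →ₗ[k] H ⊗[k] H := Coalgebra.comul

/-- The counit of `H`. -/
abbrev counitH : H →ₗ[k] k := Coalgebra.counit

/-- The rearrangement `(M ⊗ N) ⊗ P ≃ (M ⊗ P) ⊗ N`. -/
def rightComm (M N P : Type*) [AddCommGroup M] [AddCommGroup N] [AddCommGroup P]
    [Module k M] [Module k N] [Module k P] :
    (M ⊗[k] N) ⊗[k] P ≃ₗ[k] (M ⊗[k] P) ⊗[k] N :=
  TensorProduct.assoc k M N P ≪≫ₗ
    TensorProduct.congr (LinearEquiv.refl k M) (TensorProduct.comm k N P) ≪≫ₗ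
      (TensorProduct.assoc k M P N).symm

/-- The comultiplication of the tensor product coalgebra `H ⊗ H`:
`h ⊗ g ↦ Σ (h₍₁₎ ⊗ g₍₁₎) ⊗ (h₍₂₎ ⊗ g₍₂₎)`. -/
def comul2 : H ⊗[k] H →ₗ[k] (H ⊗[k] H) ⊗[k] (H ⊗[k] H) :=
  (TensorProduct.tensorTensorTensorComm k H H H H).toLinearMap ∘ₗ
    TensorProduct.map (comulH k H) (comulH k H)

/-- Iterated comultiplication `h ↦ Σ (h₍₁₎ ⊗ h₍₂₎) ⊗ h₍₃₎`. -/
def comul3H : H →ₗ[k] (H ⊗[k] H) ⊗[k] H :=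
  LinearMap.rTensor H (comulH k H) ∘ₗ comulH k H

/-- The comultiplication of the tensor product coalgebra `(H ⊗ H) ⊗ H`. -/
def comul3 : (H ⊗[k] H) ⊗[k] H →ₗ[k]
    ((H ⊗[k] H) ⊗[k] H) ⊗[k] ((H ⊗[k] H) ⊗[k] H) :=
  (TensorProduct.tensorTensorTensorComm k (H ⊗[k] H) (H ⊗[k] H) H H).toLinearMap ∘ₗ
    TensorProduct.map (comul2 k H) (comulH k H)

/-- The target map `Π^L(h) = Σ ε(1₍₁₎ h) 1₍₂₎`. -/
def piL : H →ₗ[k] H :=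
  (TensorProduct.lid k H).toLinearMap ∘ₗ
    TensorProduct.map (counitH k H) (LinearMap.id : H →ₗ[k] H) ∘ₗ
      LinearMap.mulLeft k (comulH k H 1) ∘ₗ (TensorProduct.mk k H H).flip 1

/-- The source map `Π^R(h) = Σ 1₍₁₎ ε(h 1₍₂₎)`. -/
def piR : H →ₗ[k] H :=
  (TensorProduct.rid k H).toLinearMap ∘ₗ
    TensorProduct.map (LinearMap.id : H →ₗ[k] H) (counitH k H) ∘ₗ
      LinearMap.mulRight k (comulH k H 1) ∘ₗ TensorProduct.mk k H H 1

/-- The axioms of a weak bialgebra:  `Δ` is multiplicative, the weak counit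
axiom `ε(xyz) = Σ ε(x y₍₁₎) ε(y₍₂₎ z) = Σ ε(x y₍₂₎) ε(y₍₁₎ z)` holds, and the
weak unit axiom
`(Δ⊗id)(Δ(1)) = (Δ(1)⊗1)(1⊗Δ(1)) = (1⊗Δ(1))(Δ(1)⊗1)` holds. -/
structure IsWeakBialgebra : Prop where
  comul_mul : ∀ x y : H, comulH k H (x * y) = comulH k H x * comulH k H y
  counit_mul : ∀ x y z : H,
    counitH k H (x * y * z) =
      (LinearMap.mul' k k ∘ₗ TensorProduct.map
        (counitH k H ∘ₗ LinearMap.mulLeft k x)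
        (counitH k H ∘ₗ LinearMap.mulRight k z)) (comulH k H y)
  counit_mul_op : ∀ x y z : H,
    counitH k H (x * y * z) =
      (LinearMap.mul' k k ∘ₗ TensorProduct.map
        (counitH k H ∘ₗ LinearMap.mulLeft k x)
        (counitH k H ∘ₗ LinearMap.mulRight k z))
        (TensorProduct.comm k H H (comulH k H y))
  comul_one_left :
    comul3H k H 1 =
      (comulH k H 1 ⊗ₜ[k] (1 : H)) *
        (TensorProduct.assoc k H H H).symm ((1 : H) ⊗ₜ[k] comulH k H 1)
  comul_one_right :
    comul3H k H 1 =
      ((TensorProduct.assoc k H H H).symm ((1 : H) ⊗ₜ[k] comulH k H 1)) *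
        (comulH k H 1 ⊗ₜ[k] (1 : H))

/-- The axioms of an antipode of a weak Hopf algebra:
`Σ h₍₁₎ S(h₍₂₎) = Π^L(h)`, `Σ S(h₍₁₎) h₍₂₎ = Π^R(h)` and
`Σ S(h₍₁₎) h₍₂₎ S(h₍₃₎) = S(h)`. -/
structure IsWeakHopf (S : H →ₗ[k] H) : Prop where
  antipode_left : ∀ h : H,
    LinearMap.mul' k H (LinearMap.lTensor H S (comulH k H h)) = piL k H h
  antipode_right : ∀ h : H,
    LinearMap.mul' k H (LinearMap.rTensor H S (comulH k H h)) = piR k H h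
  antipode_mid : ∀ h : H,
    LinearMap.mul' k H
      (TensorProduct.map (LinearMap.mul' k H ∘ₗ LinearMap.rTensor H S) S
        (comul3H k H h)) = S h

variable {k H A}

/-- `h ↦ ρ(h ⊗ a)`. -/
def rhoAt (ρ : H ⊗[k] A →ₗ[k] A) (a : A) : H →ₗ[k] A :=
  ρ ∘ₗ (TensorProduct.mk k H A).flip a

/-- `ρ` is a weak measure of `H` on `A`:
`ρ(h ⊗ ab) = Σ ρ(h₍₁₎ ⊗ a) ρ(h₍₂₎ ⊗ b)`. -/
def IsWeakMeasure (ρ : H ⊗[k] A →ₗ[k] A) : Prop :=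
  ∀ (h : H) (a b : A),
    ρ (h ⊗ₜ[k] (a * b)) =
      (LinearMap.mul' k A ∘ₗ TensorProduct.map ρ ρ)
        (TensorProduct.tensorTensorTensorComm k H H A A
          (comulH k H h ⊗ₜ[k] (a ⊗ₜ[k] b)))

/-- Convolution product on `Hom(H, B)`: `(α * β)(h) = Σ α(h₍₁₎) β(h₍₂₎)`. -/
def conv1 {B : Type*} [Ring B] [Algebra k B] (α β : H →ₗ[k] B) : H →ₗ[k] B :=
  LinearMap.mul' k B ∘ₗ TensorProduct.map α β ∘ₗ comulH k H

/-- Convolution product on `Hom(H ⊗ H, A)` with respect to the tensor product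
coalgebra structure of `H ⊗ H`. -/
def conv2 (α β : H ⊗[k] H →ₗ[k] A) : H ⊗[k] H →ₗ[k] A :=
  LinearMap.mul' k A ∘ₗ TensorProduct.map α β ∘ₗ comul2 k H

/-- `(h, g) ↦ Σ α(h₍₁₎ ⊗ g₍₁₎) ε(h₍₂₎ g₍₂₎)`. -/
def convCounitR (α : H ⊗[k] H →ₗ[k] A) : H ⊗[k] H →ₗ[k] A :=
  (TensorProduct.rid k A).toLinearMap ∘ₗ
    TensorProduct.map α (counitH k H ∘ₗ LinearMap.mul' k H) ∘ₗ comul2 k H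

/-- `(h, g) ↦ Σ ε(h₍₁₎ g₍₁₎) α(h₍₂₎ ⊗ g₍₂₎)`. -/
def convCounitL (α : H ⊗[k] H →ₗ[k] A) : H ⊗[k] H →ₗ[k] A :=
  (TensorProduct.lid k A).toLinearMap ∘ₗ
    TensorProduct.map (counitH k H ∘ₗ LinearMap.mul' k H) α ∘ₗ comul2 k H

/-- `L(φ)(a ⊗ h) = Σ a φ(h₍₁₎) ⊗ h₍₂₎`. -/
def Lmap (φ : H →ₗ[k] A) : A ⊗[k] H →ₗ[k] A ⊗[k] H :=
  LinearMap.rTensor H (LinearMap.mul' k A ∘ₗ LinearMap.lTensor A φ) ∘ₗ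
    (TensorProduct.assoc k A H H).symm.toLinearMap ∘ₗ
      LinearMap.lTensor A (comulH k H)

/-- The idempotent `∇_ρ(a ⊗ h) = Σ a ρ(h₍₁₎ ⊗ 1) ⊗ h₍₂₎`. -/
def nablaRho (ρ : H ⊗[k] A →ₗ[k] A) : A ⊗[k] H →ₗ[k] A ⊗[k] H :=
  Lmap (rhoAt ρ 1)

/-- The twisting map `χ_ρ(h ⊗ a) = Σ ρ(h₍₁₎ ⊗ a) ⊗ h₍₂₎`. -/
def chiRho (ρ : H ⊗[k] A →ₗ[k] A) : H ⊗[k] A →ₗ[k] A ⊗[k] H :=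
  LinearMap.rTensor H ρ ∘ₗ (rightComm k H H A).toLinearMap ∘ₗ
    LinearMap.rTensor A (comulH k H)

/-- The preunit `ν = Σ ρ(1₍₁₎ ⊗ 1_A) ⊗ 1₍₂₎ ∈ A ⊗ H`. -/
def nu (ρ : H ⊗[k] A →ₗ[k] A) : A ⊗[k] H :=
  chiRho ρ ((1 : H) ⊗ₜ[k] (1 : A))

/-- `F_f(h ⊗ g) = Σ f(h₍₁₎ ⊗ g₍₁₎) ⊗ h₍₂₎ g₍₂₎`. -/
def Fmap (f : H ⊗[k] H →ₗ[k] A) : H ⊗[k] H →ₗ[k] A ⊗[k] H :=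
  TensorProduct.map f (LinearMap.mul' k H) ∘ₗ comul2 k H

/-- The twisted module condition:
`Σ f(h₍₁₎⊗g₍₁₎) ρ(h₍₂₎g₍₂₎⊗a) = Σ ρ(h₍₁₎ ⊗ ρ(g₍₁₎⊗a)) f(h₍₂₎⊗g₍₂₎)`. -/
def IsTwistedModule (ρ : H ⊗[k] A →ₗ[k] A) (f : H ⊗[k] H →ₗ[k] A) : Prop :=
  ∀ a : A,
    conv2 f (rhoAt ρ a ∘ₗ LinearMap.mul' k H) =
      conv2 (ρ ∘ₗ LinearMap.lTensor H (rhoAt ρ a)) f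

/-- The cocycle condition:
`Σ f(h₍₁₎⊗g₍₁₎) f(h₍₂₎g₍₂₎⊗l) = Σ ρ(h₍₁₎ ⊗ f(g₍₁₎⊗l₍₁₎)) f(h₍₂₎ ⊗ g₍₂₎l₍₂₎)`. -/
def IsCocycle (ρ : H ⊗[k] A →ₗ[k] A) (f : H ⊗[k] H →ₗ[k] A) : Prop :=
  LinearMap.mul' k A ∘ₗ
      TensorProduct.map f (f ∘ₗ LinearMap.rTensor H (LinearMap.mul' k H)) ∘ₗ
        (TensorProduct.assoc k (H ⊗[k] H) (H ⊗[k] H) H).toLinearMap ∘ₗ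
          LinearMap.rTensor H (comul2 k H) =
    LinearMap.mul' k A ∘ₗ
      TensorProduct.map
        (ρ ∘ₗ LinearMap.lTensor H f ∘ₗ (TensorProduct.assoc k H H H).toLinearMap)
        (f ∘ₗ LinearMap.lTensor H (LinearMap.mul' k H) ∘ₗ
          (TensorProduct.assoc k H H H).toLinearMap) ∘ₗ
        comul3 k H

/-- The data `(ρ, f)` of a unitary weak crossed product, i.e. conditions
(i)–(v) of the paper: `ρ` is a weak measure, `f` is normalized
(`f(h⊗g) = Σ f(h₍₁₎⊗g₍₁₎) ρ(h₍₂₎g₍₂₎⊗1)`), `f` is a cocycle satisfying the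
twisted module condition, and the preunit conditions for
`ν = Σ ρ(1₍₁₎⊗1)⊗1₍₂₎` hold. -/
structure IsCrossedProdData (ρ : H ⊗[k] A →ₗ[k] A) (f : H ⊗[k] H →ₗ[k] A) : Prop where
  measure : IsWeakMeasure ρ
  normal : f = conv2 f (rhoAt ρ 1 ∘ₗ LinearMap.mul' k H)
  twisted : IsTwistedModule ρ f
  cocycle : IsCocycle ρ f
  preunit_left : ∀ h : H,
    rhoAt ρ 1 h =
      (LinearMap.mul' k A ∘ₗ TensorProduct.map ρ f)
        (TensorProduct.tensorTensorTensorComm k H H A H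
          (comulH k H h ⊗ₜ[k] nu ρ))
  preunit_right : ∀ h : H,
    rhoAt ρ 1 h =
      (LinearMap.mul' k A ∘ₗ
        LinearMap.lTensor A (f ∘ₗ (TensorProduct.mk k H H).flip h)) (nu ρ)
  preunit_mid : ∀ a : A,
    Lmap (rhoAt ρ a) (nu ρ) =
      LinearMap.rTensor H (LinearMap.mulLeft k a) (nu ρ)

/-- `E = A ×_ρ^f H`, the image of the idempotent `∇_ρ`. -/
abbrev CrossE (ρ : H ⊗[k] A →ₗ[k] A) : Submodule k (A ⊗[k] H) :=
  LinearMap.range (nablaRho ρ)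

/-- The inclusion `ι : E → A ⊗ H`. -/
def iotaE (ρ : H ⊗[k] A →ₗ[k] A) : CrossE ρ →ₗ[k] A ⊗[k] H :=
  (CrossE ρ).subtype

/-- The projection `p : A ⊗ H → E`, the corestriction of `∇_ρ`. -/
def pE (ρ : H ⊗[k] A →ₗ[k] A) : A ⊗[k] H →ₗ[k] CrossE ρ :=
  (nablaRho ρ).rangeRestrict

/-- The product `μ♯((a⊗h)⊗(b⊗g)) = Σ a ρ(h₍₁₎⊗b) f(h₍₂₎⊗g₍₁₎) ⊗ h₍₃₎g₍₂₎`. -/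
def muSharp (ρ : H ⊗[k] A →ₗ[k] A) (f : H ⊗[k] H →ₗ[k] A) :
    (A ⊗[k] H) ⊗[k] (A ⊗[k] H) →ₗ[k] A ⊗[k] H :=
  LinearMap.rTensor H (LinearMap.mul' k A) ∘ₗ
  (TensorProduct.assoc k A A H).symm.toLinearMap ∘ₗ
  LinearMap.lTensor A
    (LinearMap.rTensor H (LinearMap.mul' k A) ∘ₗ
     (TensorProduct.assoc k A A H).symm.toLinearMap ∘ₗ
     LinearMap.lTensor A (Fmap f) ∘ₗ
     (TensorProduct.assoc k A H H).toLinearMap ∘ₗ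
     LinearMap.rTensor H (chiRho ρ) ∘ₗ
     (TensorProduct.assoc k H A H).symm.toLinearMap) ∘ₗ
  (TensorProduct.assoc k A H (A ⊗[k] H)).toLinearMap

/-- The product of the unitary crossed product `E = A ×_ρ^f H`. -/
def crossMul (ρ : H ⊗[k] A →ₗ[k] A) (f : H ⊗[k] H →ₗ[k] A) (x y : CrossE ρ) :
    CrossE ρ :=
  pE ρ (muSharp ρ f (iotaE ρ x ⊗ₜ[k] iotaE ρ y))

/-- The product of the crossed product as a linear map. -/
def mulE (ρ : H ⊗[k] A →ₗ[k] A) (f : H ⊗[k] H →ₗ[k] A) :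
    CrossE ρ ⊗[k] CrossE ρ →ₗ[k] CrossE ρ :=
  pE ρ ∘ₗ muSharp ρ f ∘ₗ TensorProduct.map (iotaE ρ) (iotaE ρ)

/-- The unit `1_E = p(ν)` of the crossed product. -/
def crossOne (ρ : H ⊗[k] A →ₗ[k] A) : CrossE ρ := pE ρ (nu ρ)

/-- `γ(h) = p(1_A ⊗ h)`. -/
def gammaE (ρ : H ⊗[k] A →ₗ[k] A) : H →ₗ[k] CrossE ρ :=
  pE ρ ∘ₗ TensorProduct.mk k A H 1

/-- `a ↦ Σ a ν_A ⊗ ν_H`. -/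
def jnuAux (ρ : H ⊗[k] A →ₗ[k] A) : A →ₗ[k] A ⊗[k] H :=
  LinearMap.rTensor H (LinearMap.mul' k A) ∘ₗ
    (TensorProduct.assoc k A A H).symm.toLinearMap ∘ₗ
      (TensorProduct.mk k A (A ⊗[k] H)).flip (nu ρ)

/-- `j_ν(a) = p(Σ a ν_A ⊗ ν_H)`. -/
def jnuE (ρ : H ⊗[k] A →ₗ[k] A) : A →ₗ[k] CrossE ρ := pE ρ ∘ₗ jnuAux ρ

/-- The left action `a ▸ (b ⊗ h) = ab ⊗ h` of `A` on `A ⊗ H`. -/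
def aAct (a : A) : A ⊗[k] H →ₗ[k] A ⊗[k] H :=
  LinearMap.rTensor H (LinearMap.mulLeft k a)

/-- The comodule structure `δ_E = (p ⊗ id) ∘ (id ⊗ Δ) ∘ ι` of the crossed
product. -/
def deltaE (ρ : H ⊗[k] A →ₗ[k] A) : CrossE ρ →ₗ[k] CrossE ρ ⊗[k] H :=
  LinearMap.rTensor H (pE ρ) ∘ₗ
    (TensorProduct.assoc k A H H).symm.toLinearMap ∘ₗ
      LinearMap.lTensor A (comulH k H) ∘ₗ iotaE ρ

/-- The componentwise product `(x⊗h)(y⊗g) = x·y ⊗ hg` on `E ⊗ H`. -/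
def mulEH (ρ : H ⊗[k] A →ₗ[k] A) (f : H ⊗[k] H →ₗ[k] A) :
    (CrossE ρ ⊗[k] H) ⊗[k] (CrossE ρ ⊗[k] H) →ₗ[k] CrossE ρ ⊗[k] H :=
  TensorProduct.map (mulE ρ f) (LinearMap.mul' k H) ∘ₗ
    (TensorProduct.tensorTensorTensorComm k (CrossE ρ) H (CrossE ρ) H).toLinearMap

/-- Convolution on `Hom(H, E)` using the crossed product multiplication. -/
def convE (ρ : H ⊗[k] A →ₗ[k] A) (f : H ⊗[k] H →ₗ[k] A)
    (α β : H →ₗ[k] CrossE ρ) : H →ₗ[k] CrossE ρ :=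
  mulE ρ f ∘ₗ TensorProduct.map α β ∘ₗ comulH k H

/-- `γ⁻¹(h) = Σ j_ν(f⁻¹(S(h₍₁₎)₍₁₎ ⊗ h₍₂₎)) · γ(S(h₍₁₎)₍₂₎)`. -/
def gammaInv (ρ : H ⊗[k] A →ₗ[k] A) (f : H ⊗[k] H →ₗ[k] A)
    (S : H →ₗ[k] H) (fi : H ⊗[k] H →ₗ[k] A) : H →ₗ[k] CrossE ρ :=
  mulE ρ f ∘ₗ
    TensorProduct.map (jnuE ρ ∘ₗ fi) (gammaE ρ) ∘ₗ
      (rightComm k H H H).toLinearMap ∘ₗ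
        LinearMap.rTensor H (comulH k H) ∘ₗ
          LinearMap.rTensor H S ∘ₗ comulH k H

/-- `(id ⊗ ε) : A ⊗ H → A`. -/
def epsA : A ⊗[k] H →ₗ[k] A :=
  (TensorProduct.rid k A).toLinearMap ∘ₗ LinearMap.lTensor A (counitH k H)

/-- Right `H`-comodule algebra structure on a unital algebra `B`. -/
structure IsComodAlg {B : Type*} [Ring B] [Algebra k B]
    (δB : B →ₗ[k] B ⊗[k] H) : Prop where
  counit : ∀ b : B,
    (TensorProduct.rid k B) (LinearMap.lTensor B (counitH k H) (δB b)) = b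
  coassoc : (TensorProduct.assoc k B H H).toLinearMap ∘ₗ
      LinearMap.rTensor H δB ∘ₗ δB = LinearMap.lTensor B (comulH k H) ∘ₗ δB
  mul_compat : ∀ x y : B, δB (x * y) = δB x * δB y
  one_compat : LinearMap.lTensor B (piL k H) (δB 1) = δB 1

/-- `(B, j)` is an `H`-cleft extension of `A`, with cleaving map `γ` and
convolution inverse `γi`. -/
structure IsCleft {B : Type*} [Ring B] [Algebra k B]
    (δB : B →ₗ[k] B ⊗[k] H) (j : A →ₗ[k] B) (γ γi : H →ₗ[k] B) : Prop where
  comodAlg : IsComodAlg δB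
  j_mul : ∀ a b : A, j (a * b) = j a * j b
  j_one : j 1 = 1
  j_inj : Function.Injective j
  j_equalizes : ∀ a : A,
    LinearMap.lTensor B (piL k H) (δB (j a)) = δB (j a)
  j_equalizer : ∀ (X : Type*) [AddCommGroup X] [Module k X] (g : X →ₗ[k] B),
    (∀ x : X, LinearMap.lTensor B (piL k H) (δB (g x)) = δB (g x)) →
      ∃! g' : X →ₗ[k] A, j ∘ₗ g' = g
  colinear : ∀ h : H, δB (γ h) = LinearMap.rTensor H γ (comulH k H h)
  total : γ 1 = 1
  inv_left : conv1 γi γ = γ ∘ₗ piR k H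
  inv_right : conv1 γ γi = γ ∘ₗ piL k H
  inv_norm : conv1 (γ ∘ₗ piR k H) γi = γi
  factors : ∃ t : H →ₗ[k] A, γ ∘ₗ piL k H = j ∘ₗ t

/-- `q(x) = Σ x₍₀₎ γ⁻¹(x₍₁₎)`. -/
def qMap {B : Type*} [Ring B] [Algebra k B]
    (δB : B →ₗ[k] B ⊗[k] H) (γi : H →ₗ[k] B) : B →ₗ[k] B :=
  LinearMap.mul' k B ∘ₗ LinearMap.lTensor B γi ∘ₗ δB

/-- `ρ(h ⊗ a) = p(γ(h) j(a))`. -/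
def cleftRho {B : Type*} [Ring B] [Algebra k B]
    (γ : H →ₗ[k] B) (j : A →ₗ[k] B) (p : B →ₗ[k] A) : H ⊗[k] A →ₗ[k] A :=
  p ∘ₗ LinearMap.mul' k B ∘ₗ TensorProduct.map γ j

/-- `f(h ⊗ g) = p(γ(h) γ(g))`. -/
def cleftF {B : Type*} [Ring B] [Algebra k B]
    (γ : H →ₗ[k] B) (p : B →ₗ[k] A) : H ⊗[k] H →ₗ[k] A :=
  p ∘ₗ LinearMap.mul' k B ∘ₗ TensorProduct.map γ γ

/-- `w(a ⊗ h) = j(a) γ(h)`. -/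
def wMap {B : Type*} [Ring B] [Algebra k B]
    (j : A →ₗ[k] B) (γ : H →ₗ[k] B) : A ⊗[k] H →ₗ[k] B :=
  LinearMap.mul' k B ∘ₗ TensorProduct.map j γ

end WeakCrossed


namespace WeakCrossed

section Aux

set_option synthInstance.maxHeartbeats 1000000
set_option linter.unusedSectionVars false

variable {k : Type*} [Field k]
variable {H : Type*} [Ring H] [Algebra k H] [Coalgebra k H]
variable {A : Type*} [Ring A] [Algebra k A]

lemma rhoAt_apply (ρ : H ⊗[k] A →ₗ[k] A) (a : A) (u : H) :
    rhoAt ρ a u = ρ (u ⊗ₜ[k] a) := rfl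

lemma aAct_tmul (a b : A) (h : H) :
    aAct (k := k) a (b ⊗ₜ[k] h) = (a * b) ⊗ₜ[k] h := by
  simp [aAct]

lemma aAct_one (x : A ⊗[k] H) : aAct (k := k) (1 : A) x = x := by
  induction x using TensorProduct.induction_on with
  | zero => simp
  | tmul b h => simp [aAct_tmul]
  | add x y hx hy => rw [map_add, hx, hy]

lemma aAct_aAct (a b : A) (x : A ⊗[k] H) :
    aAct (k := k) a (aAct (k := k) b x) = aAct (k := k) (a * b) x := by
  induction x using TensorProduct.induction_on with
  | zero => simp
  | tmul c h => simp [aAct_tmul, mul_assoc]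
  | add x y hx hy => simp only [map_add, hx, hy]

/-- `Φ b c ((u⊗v)⊗w) = ρ(u⊗b) ρ(v⊗c) ⊗ w`. -/
def Phi (ρ : H ⊗[k] A →ₗ[k] A) (b c : A) :
    (H ⊗[k] H) ⊗[k] H →ₗ[k] A ⊗[k] H :=
  LinearMap.rTensor H
    (LinearMap.mul' k A ∘ₗ TensorProduct.map (rhoAt ρ b) (rhoAt ρ c))

lemma L_core (ρ : H ⊗[k] A →ₗ[k] A) (φ : H →ₗ[k] A) (b : A) (s : H ⊗[k] H) :
    LinearMap.rTensor H (LinearMap.mul' k A ∘ₗ LinearMap.lTensor A φ)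
        ((TensorProduct.assoc k A H H).symm (b ⊗ₜ[k] s))
      = aAct (k := k) b (LinearMap.rTensor H φ s) := by
  induction s using TensorProduct.induction_on with
  | zero => simp
  | tmul u v => simp [aAct_tmul]
  | add x y hx hy => simp only [TensorProduct.tmul_add, map_add, hx, hy]

lemma Lmap_tmul (ρ : H ⊗[k] A →ₗ[k] A) (φ : H →ₗ[k] A) (b : A) (h : H) :
    Lmap φ (b ⊗ₜ[k] h)
      = aAct (k := k) b (LinearMap.rTensor H φ (comulH k H h)) := by
  simp only [Lmap, LinearMap.comp_apply, LinearEquiv.coe_coe,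
    LinearMap.lTensor_tmul]
  exact L_core ρ φ b (comulH k H h)

lemma L_P (ρ : H ⊗[k] A →ₗ[k] A) (b c : A) (z : H ⊗[k] H) :
    Lmap (rhoAt ρ c) (LinearMap.rTensor H (rhoAt ρ b) z)
      = Phi ρ b c
          ((TensorProduct.assoc k H H H).symm
            (LinearMap.lTensor H (comulH k H) z)) := by
  induction z using TensorProduct.induction_on with
  | zero => simp
  | tmul u v =>
    simp only [LinearMap.rTensor_tmul, LinearMap.lTensor_tmul]
    rw [Lmap_tmul ρ]
    generalize comulH k H v = s
    induction s using TensorProduct.induction_on with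
    | zero => simp
    | tmul v1 v2 =>
      simp [Phi, aAct_tmul, rhoAt_apply]
    | add x y hx hy =>
      simp only [TensorProduct.tmul_add, map_add, hx, hy]
  | add x y hx hy => simp only [map_add, hx, hy]

lemma L_M (ρ : H ⊗[k] A →ₗ[k] A) (hm : IsWeakMeasure ρ) (b c : A)
    (z : H ⊗[k] H) :
    Phi ρ b c (LinearMap.rTensor H (comulH k H) z)
      = LinearMap.rTensor H (rhoAt ρ (b * c)) z := by
  induction z using TensorProduct.induction_on with
  | zero => simp
  | tmul u w =>
    simp only [LinearMap.rTensor_tmul, Phi]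
    congr 1
    rw [rhoAt_apply, hm u b c]
    generalize comulH k H u = s
    induction s using TensorProduct.induction_on with
    | zero => simp
    | tmul u1 u2 =>
      simp [rhoAt_apply, TensorProduct.tensorTensorTensorComm_tmul]
    | add x y hx hy =>
      simp only [map_add, TensorProduct.add_tmul, hx, hy]
  | add x y hx hy => simp only [map_add, hx, hy]

lemma L_nu (ρ : H ⊗[k] A →ₗ[k] A) :
    nu ρ = LinearMap.rTensor H (rhoAt ρ 1) (comulH k H 1) := by
  simp only [nu, chiRho, LinearMap.comp_apply, LinearEquiv.coe_coe,
    LinearMap.rTensor_tmul]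
  generalize comulH k H (1 : H) = s
  induction s using TensorProduct.induction_on with
  | zero => simp
  | tmul x y => simp [rightComm, rhoAt_apply]
  | add x y hx hy => simp only [map_add, TensorProduct.add_tmul, hx, hy]

lemma L_jnuAux (ρ : H ⊗[k] A →ₗ[k] A) (a : A) :
    jnuAux ρ a = aAct (k := k) a (nu ρ) := by
  simp only [jnuAux, LinearMap.comp_apply, LinearEquiv.coe_coe,
    LinearMap.flip_apply, TensorProduct.mk_apply]
  generalize nu ρ = x
  induction x using TensorProduct.induction_on with
  | zero => simp
  | tmul c w => simp [aAct_tmul]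
  | add x y hx hy => simp only [map_add, TensorProduct.tmul_add, hx, hy]

lemma nabla_tmul (ρ : H ⊗[k] A →ₗ[k] A) (b : A) (h : H) :
    nablaRho ρ (b ⊗ₜ[k] h)
      = aAct (k := k) b (LinearMap.rTensor H (rhoAt ρ 1) (comulH k H h)) :=
  Lmap_tmul ρ (rhoAt ρ 1) b h

lemma nabla_aAct (ρ : H ⊗[k] A →ₗ[k] A) (a : A) (x : A ⊗[k] H) :
    nablaRho ρ (aAct (k := k) a x) = aAct (k := k) a (nablaRho ρ x) := by
  induction x using TensorProduct.induction_on with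
  | zero => simp
  | tmul b h =>
    rw [aAct_tmul, nabla_tmul, nabla_tmul, aAct_aAct]
  | add x y hx hy => simp only [map_add, hx, hy]

lemma nabla_nu (ρ : H ⊗[k] A →ₗ[k] A) (hm : IsWeakMeasure ρ) :
    nablaRho ρ (nu ρ) = nu ρ := by
  conv_lhs => rw [L_nu]
  rw [show nablaRho ρ = Lmap (rhoAt ρ 1) from rfl,
    L_P ρ 1 1 (comulH k H 1), Coalgebra.coassoc_symm_apply,
    L_M ρ hm 1 1 (comulH k H 1), one_mul, ← L_nu]

lemma psi_mul (ρ : H ⊗[k] A →ₗ[k] A)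
    (hcomp : ∀ h g : H,
      ρ ((h * g) ⊗ₜ[k] (1 : A)) = ρ (h ⊗ₜ[k] ρ (g ⊗ₜ[k] (1 : A))))
    (g : H) (z : H ⊗[k] H) :
    LinearMap.rTensor H (rhoAt ρ 1) (z * (g ⊗ₜ[k] (1 : H)))
      = LinearMap.rTensor H (rhoAt ρ (ρ (g ⊗ₜ[k] (1 : A)))) z := by
  induction z using TensorProduct.induction_on with
  | zero => simp
  | tmul u v =>
    simp [Algebra.TensorProduct.tmul_mul_tmul, rhoAt_apply, hcomp u g]
  | add x y hx hy => simp only [add_mul, map_add, hx, hy]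

lemma piL_eq (h : H) :
    piL k H h
      = (TensorProduct.lid k H)
          (TensorProduct.map (counitH k H ∘ₗ LinearMap.mulRight k h)
            LinearMap.id (comulH k H 1)) := by
  simp only [piL, LinearMap.comp_apply, LinearEquiv.coe_coe,
    LinearMap.flip_apply, TensorProduct.mk_apply, LinearMap.mulLeft_apply]
  generalize comulH k H (1 : H) = z
  induction z using TensorProduct.induction_on with
  | zero => simp
  | tmul u v => simp [Algebra.TensorProduct.tmul_mul_tmul]
  | add x y hx hy => simp only [map_add, add_mul, hx, hy]

lemma deltaPiL (hWB : IsWeakBialgebra k H) (h : H) :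
    comulH k H (piL k H h)
      = comulH k H 1 * (piL k H h ⊗ₜ[k] (1 : H)) := by
  set Tm : (H ⊗[k] H) ⊗[k] H →ₗ[k] H ⊗[k] H :=
    (TensorProduct.lid k (H ⊗[k] H)).toLinearMap ∘ₗ
      TensorProduct.map (counitH k H ∘ₗ LinearMap.mulRight k h)
        LinearMap.id ∘ₗ (TensorProduct.assoc k H H H).toLinearMap with hTm
  have claimA : ∀ z : H ⊗[k] H,
      Tm ((TensorProduct.assoc k H H H).symm
          (LinearMap.lTensor H (comulH k H) z))
        = comulH k H
            ((TensorProduct.lid k H)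
              (TensorProduct.map (counitH k H ∘ₗ LinearMap.mulRight k h)
                LinearMap.id z)) := by
    intro z
    induction z using TensorProduct.induction_on with
    | zero => simp
    | tmul u v =>
      simp only [LinearMap.lTensor_tmul, hTm, LinearMap.comp_apply,
        LinearEquiv.coe_coe, TensorProduct.map_tmul, LinearMap.id_coe, id_eq,
        TensorProduct.lid_tmul, map_smul]
      generalize comulH k H v = s
      induction s using TensorProduct.induction_on with
      | zero => simp
      | tmul v1 v2 => simp
      | add x y hx hy =>
        simp only [TensorProduct.tmul_add, map_add, smul_add, hx, hy]
    | add x y hx hy => simp only [map_add, hx, hy]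
  have claimB : ∀ z w : H ⊗[k] H,
      Tm (((TensorProduct.assoc k H H H).symm ((1 : H) ⊗ₜ[k] w))
            * (z ⊗ₜ[k] (1 : H)))
        = w * (((TensorProduct.lid k H)
              (TensorProduct.map (counitH k H ∘ₗ LinearMap.mulRight k h)
                LinearMap.id z)) ⊗ₜ[k] (1 : H)) := by
    intro z w
    induction w using TensorProduct.induction_on with
    | zero => simp
    | tmul x y =>
      induction z using TensorProduct.induction_on with
      | zero => simp
      | tmul u v =>
        simp only [TensorProduct.assoc_symm_tmul,
          Algebra.TensorProduct.tmul_mul_tmul, one_mul, mul_one, hTm,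
          LinearMap.comp_apply, LinearEquiv.coe_coe,
          TensorProduct.assoc_tmul, TensorProduct.map_tmul,
          LinearMap.id_coe, id_eq, TensorProduct.lid_tmul,
          LinearMap.mulRight_apply]
        rw [mul_smul_comm, TensorProduct.smul_tmul']
      | add z1 z2 h1 h2 =>
        simp only [TensorProduct.add_tmul, mul_add, map_add, h1, h2]
    | add w1 w2 h1 h2 =>
      simp only [TensorProduct.tmul_add, map_add, add_mul, h1, h2]
  calc comulH k H (piL k H h)
      = Tm ((TensorProduct.assoc k H H H).symm
          (LinearMap.lTensor H (comulH k H) (comulH k H 1))) := by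
        rw [claimA, ← piL_eq]
    _ = Tm (comul3H k H 1) := by
        rw [Coalgebra.coassoc_symm_apply]; rfl
    _ = Tm (((TensorProduct.assoc k H H H).symm
            ((1 : H) ⊗ₜ[k] comulH k H 1)) * (comulH k H 1 ⊗ₜ[k] (1 : H))) := by
        rw [hWB.comul_one_right]
    _ = comulH k H 1 * (piL k H h ⊗ₜ[k] (1 : H)) := by
        rw [claimB, ← piL_eq]

end Aux

end WeakCrossed

namespace WeakCrossed

set_option synthInstance.maxHeartbeats 1000000 in
/-- If `A` is a left weak `H`-module algebra, then
`γ(Π^L(h)) = j_ν(ρ(h ⊗ 1))` for all `h`. -/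
theorem statement_14 {k : Type*} [Field k]
    {H : Type*} [Ring H] [Algebra k H] [Coalgebra k H]
    {A : Type*} [Ring A] [Algebra k A]
    (hWB : IsWeakBialgebra k H)
    (ρ : H ⊗[k] A →ₗ[k] A) (f : H ⊗[k] H →ₗ[k] A)
    (hD : IsCrossedProdData ρ f)
    (hone : ∀ a : A, ρ ((1 : H) ⊗ₜ[k] a) = a)
    (hcomp : ∀ h g : H,
      ρ ((h * g) ⊗ₜ[k] (1 : A)) = ρ (h ⊗ₜ[k] ρ (g ⊗ₜ[k] (1 : A))))
    (hpiL : ∀ (h : H) (a : A),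
      ρ (piL k H h ⊗ₜ[k] a) = ρ (h ⊗ₜ[k] (1 : A)) * a) :
    ∀ h : H, gammaE ρ (piL k H h) = jnuE ρ (ρ (h ⊗ₜ[k] (1 : A))) := by
  intro h
  set a : A := ρ (h ⊗ₜ[k] (1 : A)) with ha
  have step : LinearMap.rTensor H (rhoAt ρ a) (comulH k H 1)
      = Lmap (rhoAt ρ a) (nu ρ) := by
    rw [L_nu, L_P ρ 1 a (comulH k H 1), Coalgebra.coassoc_symm_apply,
      L_M ρ hD.measure 1 a (comulH k H 1), one_mul]
  have key1 : nablaRho ρ ((1 : A) ⊗ₜ[k] piL k H h) = jnuAux ρ a := by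
    rw [nabla_tmul, aAct_one, deltaPiL hWB h,
      psi_mul ρ hcomp (piL k H h) (comulH k H 1), hpiL h 1, mul_one, ← ha,
      step, hD.preunit_mid a, L_jnuAux]
    rfl
  have key2 : nablaRho ρ (jnuAux ρ a) = jnuAux ρ a := by
    rw [L_jnuAux, nabla_aAct, nabla_nu ρ hD.measure]
  show pE ρ ((1 : A) ⊗ₜ[k] piL k H h) = pE ρ (jnuAux ρ a)
  apply Subtype.ext
  show nablaRho ρ ((1 : A) ⊗ₜ[k] piL k H h) = nablaRho ρ (jnuAux ρ a)
  rw [key1, key2]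

end WeakCrossed
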